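/- Let the columns of a matrix X ∈ ℝ^{n×s} belong to an affine subspace A ⊆ ℝ^n of dimension r. Then the rank of the lifted matrix φ_d(X) is at most binomial(r+d, d) for every d ≥ 1. -/

import Mathlib

/-!
Write the columns as `x_j = b + V c_j` with `c_j ∈ ℝ^r`. Each monomial `x_j^α` with `|α| ≤ d`
is then a polynomial of total degree `≤ d` in `c_j`, with coefficients independent of `j`, so it
is a fixed linear combination of the monomials `c_j^β` with `|β| ≤ d`. Hence
`φ_d(X) = A φ_d(C)`, and the rank is at most the number of `β ∈ ℕ^r` with `|β| ≤ d`, which is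
`(r + d).choose d` by stars and bars with one slack variable.
-/

/-- The monomial feature ("lifting") matrix `φ_d(X)`: its rows are indexed by the
multi-indices `α` with `|α| ≤ d`, and its `(α, j)` entry is the monomial `x_j^α`,
where `x_j` is the `j`-th column of `X`. -/
def phiMatrix {n s : ℕ} (d : ℕ) (X : Matrix (Fin n) (Fin s) ℝ) :
    Matrix {α : Fin n → ℕ // ∑ i, α i ≤ d} (Fin s) ℝ :=
  Matrix.of fun α j => ∏ i, X i j ^ α.1 i

open Finset Matrix

def sumLeEquivOptionSumEq (σ : Type*) [Fintype σ] (d : ℕ) :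
    {β : σ → ℕ // ∑ i, β i ≤ d} ≃ {γ : Option σ → ℕ // ∑ i, γ i = d} where
  toFun β := ⟨fun o => o.elim (d - ∑ i, β.1 i) β.1, by
    simp only [Fintype.sum_option, Option.elim_none, Option.elim_some]
    have := β.2
    omega⟩
  invFun γ := ⟨fun i => γ.1 (some i), by
    show ∑ i, γ.1 (some i) ≤ d
    have := γ.2
    rw [Fintype.sum_option] at this
    omega⟩
  left_inv β := rfl
  right_inv γ := by
    ext (_ | i)
    · have := γ.2
      rw [Fintype.sum_option] at this
      simp only [Option.elim_none]
      omega
    · rfl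

noncomputable def symEquivSumLe (σ : Type*) [Fintype σ] [DecidableEq σ] (d : ℕ) :
    Sym (Option σ) d ≃ {β : σ → ℕ // ∑ i, β i ≤ d} :=
  (Sym.equivNatSumOfFintype (Option σ) d).trans (sumLeEquivOptionSumEq σ d).symm

noncomputable instance (σ : Type*) [Fintype σ] [DecidableEq σ] (d : ℕ) :
    Fintype {β : σ → ℕ // ∑ i, β i ≤ d} :=
  Fintype.ofEquiv _ (symEquivSumLe σ d)

theorem card_sum_le_eq_choose (σ : Type*) [Fintype σ] [DecidableEq σ] (d : ℕ) :
    Fintype.card {β : σ → ℕ // ∑ i, β i ≤ d} = (Fintype.card σ + d).choose d := by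
  rw [← Fintype.card_congr (symEquivSumLe σ d), Sym.card_sym_eq_choose, Fintype.card_option,
    add_right_comm, Nat.add_sub_cancel]

namespace MvPolynomial

variable {R σ ι : Type*} [CommSemiring R]

theorem totalDegree_prod_pow_le [Fintype ι] {q : ι → MvPolynomial σ R}
    (hq : ∀ i, (q i).totalDegree ≤ 1) (α : ι → ℕ) :
    (∏ i, q i ^ α i).totalDegree ≤ ∑ i, α i :=
  (totalDegree_finsetProd _ _).trans <| sum_le_sum fun i _ =>
    (totalDegree_pow _ _).trans <| by simpa using Nat.mul_le_mul_left (α i) (hq i)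

variable [Fintype σ]

theorem eval_eq_sum_of_totalDegree_le [DecidableEq σ] {p : MvPolynomial σ R} {d : ℕ}
    (hp : p.totalDegree ≤ d) (f : σ → R) :
    eval f p = ∑ β : {β : σ → ℕ // ∑ i, β i ≤ d},
      p.coeff (Finsupp.equivFunOnFinite.symm β.1) * ∏ i, f i ^ β.1 i := by
  let e : {β : σ → ℕ // ∑ i, β i ≤ d} ↪ (σ →₀ ℕ) :=
    ⟨fun β => Finsupp.equivFunOnFinite.symm β.1,
      fun β γ h => Subtype.ext (Finsupp.equivFunOnFinite.symm.injective h)⟩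
  have hsupp : p.support ⊆ univ.map e := by
    intro m hm
    have hm : ∑ i, m i ≤ d := by
      simpa [Finsupp.sum_fintype] using (le_totalDegree hm).trans hp
    exact mem_map.2 ⟨⟨m, hm⟩, mem_univ _, Finsupp.equivFunOnFinite_symm_coe m⟩
  rw [eval_eq', sum_subset hsupp fun m _ hm => by rw [notMem_support_iff.1 hm, zero_mul],
    sum_map]
  rfl

noncomputable def affinePoly (b : ι → R) (V : Matrix ι σ R) (i : ι) : MvPolynomial σ R :=
  C (b i) + ∑ k, C (V i k) * X k

theorem totalDegree_affinePoly_le (b : ι → R) (V : Matrix ι σ R) (i : ι) :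
    (affinePoly b V i).totalDegree ≤ 1 := by
  refine (totalDegree_add _ _).trans (max_le (by simp) ?_)
  refine totalDegree_finsetSum_le fun k _ => ?_
  rw [C_mul_X_eq_monomial]
  exact (totalDegree_monomial_le _ _).trans (by simp)

theorem eval_affinePoly (b : ι → R) (V : Matrix ι σ R) (i : ι) (c : σ → R) :
    eval c (affinePoly b V i) = b i + ∑ k, V i k * c k := by
  simp [affinePoly]

end MvPolynomial

theorem Submodule.exists_mulVec_eq_of_finrank_eq {K ι : Type*} [Field K] [Fintype ι] {r : ℕ}
    (W : Submodule K (ι → K)) (hW : Module.finrank K W = r) :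
    ∃ V : Matrix ι (Fin r) K, ∀ w ∈ W, ∃ c, V *ᵥ c = w := by
  let v := Module.finBasisOfFinrankEq K W hW
  refine ⟨(of fun k => (v k : ι → K))ᵀ, fun w hw => ⟨v.repr ⟨w, hw⟩, ?_⟩⟩
  rw [mulVec_transpose, vecMul_eq_sum]
  have h := congrArg Subtype.val (v.sum_repr ⟨w, hw⟩)
  rw [Submodule.coe_sum] at h
  exact h

section Lifting

variable {n r s : ℕ} (d : ℕ) (b : Fin n → ℝ) (V : Matrix (Fin n) (Fin r) ℝ)
  (C : Matrix (Fin r) (Fin s) ℝ) {X : Matrix (Fin n) (Fin s) ℝ}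

open MvPolynomial in
theorem phiMatrix_eq_mul_phiMatrix (hX : ∀ i j, X i j = b i + (V * C) i j) :
    phiMatrix d X = of (fun α (β : {β : Fin r → ℕ // ∑ i, β i ≤ d}) =>
      (∏ i, affinePoly b V i ^ α.1 i).coeff (Finsupp.equivFunOnFinite.symm β.1)) *
        phiMatrix d C := by
  ext α j
  have hdeg := (totalDegree_prod_pow_le (totalDegree_affinePoly_le b V) α.1).trans α.2
  simp only [mul_apply, phiMatrix, of_apply]
  rw [← eval_eq_sum_of_totalDegree_le hdeg]
  simp [eval_affinePoly, hX, mul_apply]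

theorem rank_phiMatrix_le_of_eq_add_mul (hX : ∀ i j, X i j = b i + (V * C) i j) :
    (phiMatrix d X).rank ≤ (r + d).choose d :=
  calc (phiMatrix d X).rank
    _ ≤ (phiMatrix d C).rank := by
      rw [phiMatrix_eq_mul_phiMatrix d b V C hX]
      exact rank_mul_le_right _ _
    _ ≤ Fintype.card {β : Fin r → ℕ // ∑ i, β i ≤ d} := rank_le_card_height _
    _ = (r + d).choose d := by rw [card_sum_le_eq_choose, Fintype.card_fin]

end Lifting

theorem rank_phiMatrix_le_of_affine_general (n s d r : ℕ)
    (W : Submodule ℝ (Fin n → ℝ)) (hW : Module.finrank ℝ W = r) (b : Fin n → ℝ)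
    (X : Matrix (Fin n) (Fin s) ℝ)
    (hX : ∀ j, ∃ w ∈ W, (fun i => X i j) = w + b) :
    (phiMatrix d X).rank ≤ (r + d).choose d := by
  obtain ⟨V, hV⟩ := W.exists_mulVec_eq_of_finrank_eq hW
  choose w hwW hw using hX
  choose c hc using fun j => hV (w j) (hwW j)
  refine rank_phiMatrix_le_of_eq_add_mul d b V (of c)ᵀ fun i j => ?_
  rw [congrFun (hw j) i, ← hc j, add_comm]
  rfl

/-- If the columns of `X ∈ ℝ^{n×s}` belong to an affine subspace of dimension `r`
(a translate `b + W` of a linear subspace `W` with `dim W = r`), then for every `d ≥ 1`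
the rank of the lifted matrix `φ_d(X)` is at most `(r+d).choose d`. -/
theorem rank_phiMatrix_le_of_affine (n s d r : ℕ) (hd : 1 ≤ d)
    (W : Submodule ℝ (Fin n → ℝ)) (hW : Module.finrank ℝ W = r) (b : Fin n → ℝ)
    (X : Matrix (Fin n) (Fin s) ℝ)
    (hX : ∀ j, ∃ w ∈ W, (fun i => X i j) = w + b) :
    (phiMatrix d X).rank ≤ (r + d).choose d :=
  rank_phiMatrix_le_of_affine_general n s d r W hW b X hX
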